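/- Let G = G₁ × G₂ be a product of commutative groups and f₁: G₁ → ℝ≥0, f₂: G₂ → ℝ≥0 finitely supported, f(x,y) = f₁(x)f₂(y). Then for any g, h on G written analogously as products g(x,y)=g₁(x)g₂(y), h(x,y)=h₁(x)h₂(y), (f□g□h)(x,y) ≤ (f₁□g₁□h₁)(x)·(f₂□g₂□h₂)(y), and consequently γ_p(f) ≤ γ_p(f₁)γ_p(f₂), where γ_p(f) = inf ‖f□g□h‖₁/(‖g‖_p‖h‖_q). -/
import Mathlib
set_option linter.unusedSectionVars false
set_option linter.unusedVariables false
open Pointwise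


/-- Max-convolution of real-valued functions. -/
noncomputable def maxConv {G : Type*} [AddCommGroup G] (u v : G → ℝ) : G → ℝ :=
  fun x => ⨆ t : G, u t * v (x - t)

/-- The asymmetric functional tripling γ_p(f) = inf ‖f□g□h‖₁/(‖g‖_p‖h‖_q). -/
noncomputable def gammaP {G : Type*} [AddCommGroup G] (p q : ℝ) (f : G → ℝ) : ℝ :=
  sInf {r : ℝ | ∃ g h : G → ℝ,
    (Function.support g).Finite ∧ (Function.support h).Finite ∧
    (∀ x, 0 ≤ g x) ∧ (∀ x, 0 ≤ h x) ∧ g ≠ 0 ∧ h ≠ 0 ∧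
    r = (∑' x : G, maxConv (maxConv f g) h x)
        / ((∑' x : G, g x ^ p) ^ (1/p) * (∑' x : G, h x ^ q) ^ (1/q))}

section helpers
variable {G : Type*} [AddCommGroup G]

lemma maxConv_bdd (u v : G → ℝ) (hu : (Function.support u).Finite) (x : G) :
    BddAbove (Set.range fun t => u t * v (x - t)) := by
  apply Set.Finite.bddAbove
  apply Set.Finite.subset (Set.Finite.insert 0 (hu.image (fun t => u t * v (x - t))))
  rintro _ ⟨t, rfl⟩
  by_cases h : u t = 0
  · simp [h]
  · exact Set.mem_insert_of_mem _ ⟨t, h, rfl⟩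

lemma maxConv_nonneg (u v : G → ℝ) (hu0 : ∀ t, 0 ≤ u t) (hv0 : ∀ t, 0 ≤ v t)
    (hu : (Function.support u).Finite) (x : G) : 0 ≤ maxConv u v x :=
  le_trans (mul_nonneg (hu0 0) (hv0 (x - 0))) (le_ciSup (maxConv_bdd u v hu x) 0)

lemma maxConv_support_subset (u v : G → ℝ) :
    Function.support (maxConv u v) ⊆ Function.support u + Function.support v := by
  intro x hx
  by_contra h
  apply hx
  have hz : ∀ t, u t * v (x - t) = 0 := by
    intro t
    by_contra ht
    rcases mul_ne_zero_iff.mp ht with ⟨h1, h2⟩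
    exact h ⟨t, h1, x - t, h2, by simp⟩
  have : Nonempty G := ⟨0⟩
  show maxConv u v x = 0
  unfold maxConv
  rw [show (fun t => u t * v (x - t)) = fun _ => (0:ℝ) from funext hz]
  exact ciSup_const

lemma maxConv_support_finite (u v : G → ℝ) (hu : (Function.support u).Finite)
    (hv : (Function.support v).Finite) : (Function.support (maxConv u v)).Finite :=
  (hu.add hv).subset (maxConv_support_subset u v)

lemma maxConv_mono (u u' v : G → ℝ) (h : ∀ t, u t ≤ u' t)
    (hu0 : ∀ t, 0 ≤ u' t) (hv0 : ∀ t, 0 ≤ v t) (hu' : (Function.support u').Finite) (x : G) :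
    maxConv u v x ≤ maxConv u' v x := by
  apply Real.iSup_le _ (maxConv_nonneg u' v hu0 hv0 hu' x)
  intro t
  exact le_trans (mul_le_mul_of_nonneg_right (h t) (hv0 _))
    (le_ciSup (maxConv_bdd u' v hu' x) t)

end helpers

section prodsec
variable {G₁ G₂ : Type*} [AddCommGroup G₁] [AddCommGroup G₂]

lemma maxConv_prod_le (u₁ v₁ : G₁ → ℝ) (u₂ v₂ : G₂ → ℝ)
    (hu₁0 : ∀ t, 0 ≤ u₁ t) (hv₁0 : ∀ t, 0 ≤ v₁ t)
    (hu₂0 : ∀ t, 0 ≤ u₂ t) (hv₂0 : ∀ t, 0 ≤ v₂ t)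
    (hu₁ : (Function.support u₁).Finite) (hu₂ : (Function.support u₂).Finite)
    (x : G₁) (y : G₂) :
    maxConv (fun z : G₁ × G₂ => u₁ z.1 * u₂ z.2) (fun z : G₁ × G₂ => v₁ z.1 * v₂ z.2) (x, y)
      ≤ maxConv u₁ v₁ x * maxConv u₂ v₂ y := by
  apply Real.iSup_le _ (mul_nonneg (maxConv_nonneg u₁ v₁ hu₁0 hv₁0 hu₁ x)
    (maxConv_nonneg u₂ v₂ hu₂0 hv₂0 hu₂ y))
  intro t
  have he : u₁ t.1 * u₂ t.2 * (v₁ ((x, y) - t).1 * v₂ ((x, y) - t).2)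
      = (u₁ t.1 * v₁ (x - t.1)) * (u₂ t.2 * v₂ (y - t.2)) := by
    simp only [Prod.fst_sub, Prod.snd_sub]; ring
  rw [he]
  exact mul_le_mul (le_ciSup (maxConv_bdd u₁ v₁ hu₁ x) t.1)
    (le_ciSup (maxConv_bdd u₂ v₂ hu₂ y) t.2)
    (mul_nonneg (hu₂0 _) (hv₂0 _)) (maxConv_nonneg u₁ v₁ hu₁0 hv₁0 hu₁ x)

lemma tsum_prod_mul (φ : G₁ → ℝ) (ψ : G₂ → ℝ) (hφ : (Function.support φ).Finite)
    (hψ : (Function.support ψ).Finite) :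
    (∑' z : G₁ × G₂, φ z.1 * ψ z.2) = (∑' x, φ x) * (∑' y, ψ y) := by
  classical
  rw [tsum_eq_sum (s := hφ.toFinset ×ˢ hψ.toFinset) ?_,
    tsum_eq_sum (s := hφ.toFinset) (fun b hb => by simpa using hb),
    tsum_eq_sum (s := hψ.toFinset) (fun b hb => by simpa using hb),
    Finset.sum_mul_sum, Finset.sum_product]
  intro b hb
  rw [Finset.mem_product, not_and_or] at hb
  rcases hb with h | h
  · rw [Set.Finite.mem_toFinset, Function.mem_support, not_not] at h
    rw [h, zero_mul]
  · rw [Set.Finite.mem_toFinset, Function.mem_support, not_not] at h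
    rw [h, mul_zero]

end prodsec

lemma le_sInf_mul_sInf {A B : Set ℝ} {c : ℝ} (hc : 0 ≤ c) (hA : A.Nonempty) (hB : B.Nonempty)
    (hA0 : ∀ a ∈ A, 0 ≤ a) (hB0 : ∀ b ∈ B, 0 ≤ b)
    (h : ∀ a ∈ A, ∀ b ∈ B, c ≤ a * b) : c ≤ sInf A * sInf B := by
  rcases eq_or_lt_of_le hc with rfl | hc
  · exact mul_nonneg (Real.sInf_nonneg hA0) (Real.sInf_nonneg hB0)
  obtain ⟨b₀, hb₀⟩ := hB
  have hbpos : ∀ b ∈ B, 0 < b := by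
    intro b hb
    obtain ⟨a₀, ha₀⟩ := hA
    rcases lt_or_ge 0 b with h' | h'
    · exact h'
    · exact absurd (h a₀ ha₀ b hb) (not_le.mpr (lt_of_le_of_lt (mul_nonpos_of_nonneg_of_nonpos (hA0 a₀ ha₀) h') hc))
  have h1 : ∀ b ∈ B, c / b ≤ sInf A := fun b hb =>
    le_csInf hA (fun a ha => (div_le_iff₀ (hbpos b hb)).mpr (h a ha b hb))
  have hApos : 0 < sInf A := lt_of_lt_of_le (div_pos hc (hbpos b₀ hb₀)) (h1 b₀ hb₀)
  have h2 : c / sInf A ≤ sInf B := by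
    apply le_csInf ⟨b₀, hb₀⟩
    intro b hb
    rw [div_le_iff₀ hApos]
    have := (div_le_iff₀ (hbpos b hb)).mp (h1 b hb)
    linarith [this]
  calc c = (c / sInf A) * sInf A := by field_simp
    _ ≤ sInf B * sInf A := mul_le_mul_of_nonneg_right h2 hApos.le
    _ = sInf A * sInf B := mul_comm _ _

section more
variable {G : Type*} [AddCommGroup G]

/-- The set whose infimum defines `gammaP`. -/
def gset (p q : ℝ) (f : G → ℝ) : Set ℝ :=
  {r : ℝ | ∃ g h : G → ℝ,
    (Function.support g).Finite ∧ (Function.support h).Finite ∧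
    (∀ x, 0 ≤ g x) ∧ (∀ x, 0 ≤ h x) ∧ g ≠ 0 ∧ h ≠ 0 ∧
    r = (∑' x : G, maxConv (maxConv f g) h x)
        / ((∑' x : G, g x ^ p) ^ (1/p) * (∑' x : G, h x ^ q) ^ (1/q))}

lemma gammaP_eq_sInf_gset (p q : ℝ) (f : G → ℝ) : gammaP p q f = sInf (gset p q f) := rfl

lemma gset_nonneg (p q : ℝ) (f : G → ℝ) (hf0 : ∀ x, 0 ≤ f x)
    (hfs : (Function.support f).Finite) : ∀ r ∈ gset p q f, 0 ≤ r := by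
  rintro r ⟨g, h, hgs, hhs, hg0, hh0, -, -, rfl⟩
  apply div_nonneg
  · exact tsum_nonneg fun x => maxConv_nonneg _ h (maxConv_nonneg f g hf0 hg0 hfs)
      hh0 (maxConv_support_finite f g hfs hgs) x
  · exact mul_nonneg (Real.rpow_nonneg (tsum_nonneg fun x => Real.rpow_nonneg (hg0 x) p) _)
      (Real.rpow_nonneg (tsum_nonneg fun x => Real.rpow_nonneg (hh0 x) q) _)

lemma gset_nonempty (p q : ℝ) (f : G → ℝ) : (gset p q f).Nonempty := by
  classical
  refine ⟨_, (fun x : G => if x = 0 then 1 else 0), (fun x : G => if x = 0 then 1 else 0),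
    ?_, ?_, ?_, ?_, ?_, ?_, rfl⟩
  · refine (Set.finite_singleton 0).subset fun x hx => ?_
    rcases eq_or_ne x 0 with rfl | h
    · exact rfl
    · exact absurd (if_neg h) hx
  · refine (Set.finite_singleton 0).subset fun x hx => ?_
    rcases eq_or_ne x 0 with rfl | h
    · exact rfl
    · exact absurd (if_neg h) hx
  · intro x; dsimp only; split <;> norm_num
  · intro x; dsimp only; split <;> norm_num
  · intro hcon; have := congrFun hcon 0; simp at this
  · intro hcon; have := congrFun hcon 0; simp at this

lemma lp_pos (p : ℝ) (hp : 0 < p) (g : G → ℝ) (hg0 : ∀ x, 0 ≤ g x)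
    (hgs : (Function.support g).Finite) (hg : g ≠ 0) :
    0 < (∑' x, g x ^ p) ^ (1/p) := by
  apply Real.rpow_pos_of_pos
  obtain ⟨x₀, hx₀⟩ := Function.ne_iff.mp hg
  have hx₀' : g x₀ ≠ 0 := by simpa using hx₀
  rw [tsum_eq_sum (s := hgs.toFinset) (fun b hb => by
    rw [Set.Finite.mem_toFinset, Function.mem_support, not_not] at hb
    rw [hb, Real.zero_rpow hp.ne'])]
  apply Finset.sum_pos'
  · intro i _; exact Real.rpow_nonneg (hg0 i) p
  · exact ⟨x₀, hgs.mem_toFinset.mpr hx₀',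
      Real.rpow_pos_of_pos ((hg0 x₀).lt_of_ne (Ne.symm hx₀')) p⟩

end more

section more2
variable {G₁ G₂ : Type*} [AddCommGroup G₁] [AddCommGroup G₂]

lemma support_prod_mul_finite (u₁ : G₁ → ℝ) (u₂ : G₂ → ℝ)
    (h1 : (Function.support u₁).Finite) (h2 : (Function.support u₂).Finite) :
    (Function.support fun z : G₁ × G₂ => u₁ z.1 * u₂ z.2).Finite :=
  (h1.prod h2).subset fun z hz => by
    rcases mul_ne_zero_iff.mp hz with ⟨a, b⟩; exact ⟨a, b⟩

lemma lp_prod (p : ℝ) (hp : p ≠ 0) (g₁ : G₁ → ℝ) (g₂ : G₂ → ℝ)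
    (hg₁0 : ∀ x, 0 ≤ g₁ x) (hg₂0 : ∀ y, 0 ≤ g₂ y)
    (hg₁s : (Function.support g₁).Finite) (hg₂s : (Function.support g₂).Finite) :
    (∑' z : G₁ × G₂, (g₁ z.1 * g₂ z.2) ^ p) = (∑' x, g₁ x ^ p) * (∑' y, g₂ y ^ p) := by
  have h1 : ∀ z : G₁ × G₂, (g₁ z.1 * g₂ z.2) ^ p
      = (fun x => g₁ x ^ p) z.1 * (fun y => g₂ y ^ p) z.2 :=
    fun z => Real.mul_rpow (hg₁0 _) (hg₂0 _)
  rw [tsum_congr h1]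
  exact tsum_prod_mul _ _
    (hg₁s.subset fun x hx => by
      intro h0; apply hx; show g₁ x ^ p = 0; rw [h0, Real.zero_rpow hp])
    (hg₂s.subset fun y hy => by
      intro h0; apply hy; show g₂ y ^ p = 0; rw [h0, Real.zero_rpow hp])

end more2

/-- For f(x,y) = f₁(x)f₂(y): the max-convolution of product functions is bounded
by the product of max-convolutions, and consequently γ_p(f) ≤ γ_p(f₁)·γ_p(f₂). -/
theorem stmt19 {G₁ G₂ : Type*} [AddCommGroup G₁] [AddCommGroup G₂]
    (p q : ℝ) (hp : 1 < p) (hq : 1 < q) (hpq : 1/p + 1/q = 1)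
    (f₁ : G₁ → ℝ) (f₂ : G₂ → ℝ)
    (hf₁0 : ∀ x, 0 ≤ f₁ x) (hf₂0 : ∀ y, 0 ≤ f₂ y)
    (hf₁s : (Function.support f₁).Finite) (hf₂s : (Function.support f₂).Finite) :
    (∀ (g₁ h₁ : G₁ → ℝ) (g₂ h₂ : G₂ → ℝ),
      (∀ x, 0 ≤ g₁ x) → (∀ x, 0 ≤ h₁ x) → (∀ y, 0 ≤ g₂ y) → (∀ y, 0 ≤ h₂ y) →
      (Function.support g₁).Finite → (Function.support h₁).Finite →
      (Function.support g₂).Finite → (Function.support h₂).Finite →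
      ∀ (x : G₁) (y : G₂),
        maxConv (maxConv (fun z : G₁ × G₂ => f₁ z.1 * f₂ z.2)
            (fun z : G₁ × G₂ => g₁ z.1 * g₂ z.2))
            (fun z : G₁ × G₂ => h₁ z.1 * h₂ z.2) (x, y)
          ≤ maxConv (maxConv f₁ g₁) h₁ x * maxConv (maxConv f₂ g₂) h₂ y) ∧
    gammaP p q (fun z : G₁ × G₂ => f₁ z.1 * f₂ z.2) ≤ gammaP p q f₁ * gammaP p q f₂ := by
  classical
  have hF0 : ∀ z : G₁ × G₂, 0 ≤ f₁ z.1 * f₂ z.2 := fun z => mul_nonneg (hf₁0 _) (hf₂0 _)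
  have hFs : (Function.support fun z : G₁ × G₂ => f₁ z.1 * f₂ z.2).Finite :=
    support_prod_mul_finite f₁ f₂ hf₁s hf₂s
  have hpoint : ∀ (g₁ h₁ : G₁ → ℝ) (g₂ h₂ : G₂ → ℝ),
      (∀ x, 0 ≤ g₁ x) → (∀ x, 0 ≤ h₁ x) → (∀ y, 0 ≤ g₂ y) → (∀ y, 0 ≤ h₂ y) →
      (Function.support g₁).Finite → (Function.support h₁).Finite →
      (Function.support g₂).Finite → (Function.support h₂).Finite →
      ∀ (x : G₁) (y : G₂),
        maxConv (maxConv (fun z : G₁ × G₂ => f₁ z.1 * f₂ z.2)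
            (fun z : G₁ × G₂ => g₁ z.1 * g₂ z.2))
            (fun z : G₁ × G₂ => h₁ z.1 * h₂ z.2) (x, y)
          ≤ maxConv (maxConv f₁ g₁) h₁ x * maxConv (maxConv f₂ g₂) h₂ y := by
    intro g₁ h₁ g₂ h₂ hg₁0 hh₁0 hg₂0 hh₂0 hg₁s hh₁s hg₂s hh₂s x y
    have hCs := maxConv_support_finite f₁ g₁ hf₁s hg₁s
    have hDs := maxConv_support_finite f₂ g₂ hf₂s hg₂s
    have hC0 := maxConv_nonneg f₁ g₁ hf₁0 hg₁0 hf₁s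
    have hD0 := maxConv_nonneg f₂ g₂ hf₂0 hg₂0 hf₂s
    have step1 : ∀ z : G₁ × G₂,
        maxConv (fun z : G₁ × G₂ => f₁ z.1 * f₂ z.2)
          (fun z : G₁ × G₂ => g₁ z.1 * g₂ z.2) z
          ≤ maxConv f₁ g₁ z.1 * maxConv f₂ g₂ z.2 := by
      intro z
      have := maxConv_prod_le f₁ g₁ f₂ g₂ hf₁0 hg₁0 hf₂0 hg₂0 hf₁s hf₂s z.1 z.2
      simpa using this
    refine le_trans (maxConv_mono _ (fun z : G₁ × G₂ => maxConv f₁ g₁ z.1 * maxConv f₂ g₂ z.2)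
      _ step1 (fun z => mul_nonneg (hC0 _) (hD0 _)) (fun z => mul_nonneg (hh₁0 _) (hh₂0 _))
      (support_prod_mul_finite _ _ hCs hDs) (x, y)) ?_
    exact maxConv_prod_le (maxConv f₁ g₁) h₁ (maxConv f₂ g₂) h₂ hC0 hh₁0 hD0 hh₂0 hCs hDs x y
  refine ⟨hpoint, ?_⟩
  have hp0 : (0:ℝ) < p := lt_trans one_pos hp
  have hq0 : (0:ℝ) < q := lt_trans one_pos hq
  rw [gammaP_eq_sInf_gset, gammaP_eq_sInf_gset, gammaP_eq_sInf_gset]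
  apply le_sInf_mul_sInf
    (Real.sInf_nonneg (gset_nonneg p q _ hF0 hFs))
    (gset_nonempty p q f₁) (gset_nonempty p q f₂)
    (gset_nonneg p q f₁ hf₁0 hf₁s) (gset_nonneg p q f₂ hf₂0 hf₂s)
  rintro r₁ ⟨g₁, h₁, hg₁s, hh₁s, hg₁0, hh₁0, hg₁, hh₁, rfl⟩
  rintro r₂ ⟨g₂, h₂, hg₂s, hh₂s, hg₂0, hh₂0, hg₂, hh₂, rfl⟩
  -- product witnesses
  set g : G₁ × G₂ → ℝ := fun z => g₁ z.1 * g₂ z.2 with hgdef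
  set h : G₁ × G₂ → ℝ := fun z => h₁ z.1 * h₂ z.2 with hhdef
  have hgs : (Function.support g).Finite := support_prod_mul_finite g₁ g₂ hg₁s hg₂s
  have hhs : (Function.support h).Finite := support_prod_mul_finite h₁ h₂ hh₁s hh₂s
  have hg0 : ∀ z, 0 ≤ g z := fun z => mul_nonneg (hg₁0 _) (hg₂0 _)
  have hh0 : ∀ z, 0 ≤ h z := fun z => mul_nonneg (hh₁0 _) (hh₂0 _)
  obtain ⟨x₀, hx₀⟩ := Function.ne_iff.mp hg₁
  obtain ⟨y₀, hy₀⟩ := Function.ne_iff.mp hg₂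
  obtain ⟨x₁, hx₁⟩ := Function.ne_iff.mp hh₁
  obtain ⟨y₁, hy₁⟩ := Function.ne_iff.mp hh₂
  have hgne : g ≠ 0 := fun hcon => (mul_ne_zero (by simpa using hx₀) (by simpa using hy₀))
    (congrFun hcon (x₀, y₀))
  have hhne : h ≠ 0 := fun hcon => (mul_ne_zero (by simpa using hx₁) (by simpa using hy₁))
    (congrFun hcon (x₁, y₁))
  -- numerator bound
  set C₁ : G₁ → ℝ := maxConv (maxConv f₁ g₁) h₁ with hC₁def
  set C₂ : G₂ → ℝ := maxConv (maxConv f₂ g₂) h₂ with hC₂def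
  have hC₁s : (Function.support C₁).Finite :=
    maxConv_support_finite _ _ (maxConv_support_finite f₁ g₁ hf₁s hg₁s) hh₁s
  have hC₂s : (Function.support C₂).Finite :=
    maxConv_support_finite _ _ (maxConv_support_finite f₂ g₂ hf₂s hg₂s) hh₂s
  have hC₁0 : ∀ x, 0 ≤ C₁ x :=
    maxConv_nonneg _ _ (maxConv_nonneg f₁ g₁ hf₁0 hg₁0 hf₁s) hh₁0
      (maxConv_support_finite f₁ g₁ hf₁s hg₁s)
  have hC₂0 : ∀ y, 0 ≤ C₂ y :=
    maxConv_nonneg _ _ (maxConv_nonneg f₂ g₂ hf₂0 hg₂0 hf₂s) hh₂0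
      (maxConv_support_finite f₂ g₂ hf₂s hg₂s)
  set L : G₁ × G₂ → ℝ := maxConv (maxConv (fun z : G₁ × G₂ => f₁ z.1 * f₂ z.2) g) h with hLdef
  have hL0 : ∀ z, 0 ≤ L z :=
    maxConv_nonneg _ _ (maxConv_nonneg _ g hF0 hg0 hFs) hh0
      (maxConv_support_finite _ g hFs hgs)
  have hLle : ∀ z : G₁ × G₂, L z ≤ C₁ z.1 * C₂ z.2 := by
    intro z
    have := hpoint g₁ h₁ g₂ h₂ hg₁0 hh₁0 hg₂0 hh₂0 hg₁s hh₁s hg₂s hh₂s z.1 z.2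
    simpa using this
  have hN : (∑' z : G₁ × G₂, L z) ≤ (∑' x, C₁ x) * (∑' y, C₂ y) := by
    rw [tsum_eq_sum (s := hC₁s.toFinset ×ˢ hC₂s.toFinset) (f := L) ?van,
      tsum_eq_sum (s := hC₁s.toFinset) (fun b hb => by simpa using hb),
      tsum_eq_sum (s := hC₂s.toFinset) (fun b hb => by simpa using hb),
      Finset.sum_mul_sum, ← Finset.sum_product']
    · exact Finset.sum_le_sum fun z _ => hLle z
    case van =>
      intro z hz
      rw [Finset.mem_product, not_and_or] at hz
      refine le_antisymm (le_trans (hLle z) ?_) (hL0 z)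
      rcases hz with hz | hz
      · rw [Set.Finite.mem_toFinset, Function.mem_support, not_not] at hz
        rw [hz, zero_mul]
      · rw [Set.Finite.mem_toFinset, Function.mem_support, not_not] at hz
        rw [hz, mul_zero]
  -- denominators
  have hDg : (∑' z : G₁ × G₂, g z ^ p) ^ (1/p)
      = (∑' x, g₁ x ^ p) ^ (1/p) * (∑' y, g₂ y ^ p) ^ (1/p) := by
    rw [hgdef, lp_prod p hp0.ne' g₁ g₂ hg₁0 hg₂0 hg₁s hg₂s,
      Real.mul_rpow (tsum_nonneg fun x => Real.rpow_nonneg (hg₁0 x) p)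
        (tsum_nonneg fun y => Real.rpow_nonneg (hg₂0 y) p)]
  have hDh : (∑' z : G₁ × G₂, h z ^ q) ^ (1/q)
      = (∑' x, h₁ x ^ q) ^ (1/q) * (∑' y, h₂ y ^ q) ^ (1/q) := by
    rw [hhdef, lp_prod q hq0.ne' h₁ h₂ hh₁0 hh₂0 hh₁s hh₂s,
      Real.mul_rpow (tsum_nonneg fun x => Real.rpow_nonneg (hh₁0 x) q)
        (tsum_nonneg fun y => Real.rpow_nonneg (hh₂0 y) q)]
  have hDg₁ : 0 < (∑' x, g₁ x ^ p) ^ (1/p) := lp_pos p hp0 g₁ hg₁0 hg₁s hg₁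
  have hDg₂ : 0 < (∑' y, g₂ y ^ p) ^ (1/p) := lp_pos p hp0 g₂ hg₂0 hg₂s hg₂
  have hDh₁ : 0 < (∑' x, h₁ x ^ q) ^ (1/q) := lp_pos q hq0 h₁ hh₁0 hh₁s hh₁
  have hDh₂ : 0 < (∑' y, h₂ y ^ q) ^ (1/q) := lp_pos q hq0 h₂ hh₂0 hh₂s hh₂
  -- membership and the bound
  have hmem : (∑' z : G₁ × G₂, L z)
      / ((∑' z : G₁ × G₂, g z ^ p) ^ (1/p) * (∑' z : G₁ × G₂, h z ^ q) ^ (1/q))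
      ∈ gset p q (fun z : G₁ × G₂ => f₁ z.1 * f₂ z.2) :=
    ⟨g, h, hgs, hhs, hg0, hh0, hgne, hhne, rfl⟩
  refine le_trans (csInf_le ⟨0, fun r hr => gset_nonneg p q _ hF0 hFs r hr⟩ hmem) ?_
  rw [hDg, hDh, mul_mul_mul_comm]
  calc (∑' z : G₁ × G₂, L z)
      / ((∑' x, g₁ x ^ p) ^ (1/p) * (∑' x, h₁ x ^ q) ^ (1/q)
        * ((∑' y, g₂ y ^ p) ^ (1/p) * (∑' y, h₂ y ^ q) ^ (1/q)))
      ≤ ((∑' x, C₁ x) * (∑' y, C₂ y))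
      / ((∑' x, g₁ x ^ p) ^ (1/p) * (∑' x, h₁ x ^ q) ^ (1/q)
        * ((∑' y, g₂ y ^ p) ^ (1/p) * (∑' y, h₂ y ^ q) ^ (1/q))) := by
        exact div_le_div_of_nonneg_right hN
          (mul_pos (mul_pos hDg₁ hDh₁) (mul_pos hDg₂ hDh₂)).le
    _ = ((∑' x, C₁ x) / ((∑' x, g₁ x ^ p) ^ (1/p) * (∑' x, h₁ x ^ q) ^ (1/q)))
      * ((∑' y, C₂ y) / ((∑' y, g₂ y ^ p) ^ (1/p) * (∑' y, h₂ y ^ q) ^ (1/q))) :=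
        (div_mul_div_comm _ _ _ _).symm
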